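/- arXiv:2308.16065 — 4 statements merged into one kernel-verified Lean document; each statement's English description precedes it below -/
import Mathlib

section
/- For every natural number n, the Plancherel average of (∑_{u∈λ} c_u)² over partitions λ of n equals n(n−1)/2; that is, (1/n!) ∑_{λ⊢n} f_λ² (∑_{u∈λ} c_u)² = n(n−1)/2. Equivalently, since the Plancherel average of ∑_{u∈λ} c_u is 0, the variance of X_n − Y_n under the Plancherel measure is binom(n,2). -/
open scoped BigOperators

namespace PaperStmt

/-- `Y λ = ∑_ℓ λ_ℓ (ℓ - 1)`: each box of row `ℓ` (1-indexed) is counted with weight `ℓ - 1`,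
which is the 0-indexed row coordinate of the box. -/
def Y (μ : YoungDiagram) : ℕ := ∑ c ∈ μ.cells, c.1

/-- `X λ := Y λ'` where `λ'` is the conjugate (transposed) partition. -/
def X (μ : YoungDiagram) : ℕ := Y μ.transpose

/-- The content of a (0-indexed) box `(i, j)` is `j - i`. -/
def content (c : ℕ × ℕ) : ℤ := (c.2 : ℤ) - (c.1 : ℤ)

/-- The hook length of the (0-indexed) box `(i, j)`:
`h_u = (λ_i - j) + (λ'_j - i) + 1` in 1-indexed terms. -/
def hook (μ : YoungDiagram) (c : ℕ × ℕ) : ℕ :=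
  μ.rowLen c.1 + μ.colLen c.2 - c.1 - c.2 - 1

/-- The number `f_λ` of standard Young tableaux of shape `μ`: fillings of the cells with
distinct numbers `0, …, n-1` increasing along each row and column. -/
noncomputable def sytCount (μ : YoungDiagram) : ℕ :=
  Nat.card {T : μ.cells → Fin μ.card //
    Function.Bijective T ∧
    (∀ c d : μ.cells, (c : ℕ × ℕ).1 = (d : ℕ × ℕ).1 → (c : ℕ × ℕ).2 < (d : ℕ × ℕ).2 →
      T c < T d) ∧
    (∀ c d : μ.cells, (c : ℕ × ℕ).2 = (d : ℕ × ℕ).2 → (c : ℕ × ℕ).1 < (d : ℕ × ℕ).1 →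
      T c < T d)}

/-- The Plancherel average `(1/n!) ∑_{λ ⊢ n} f_λ² φ(λ)`. -/
noncomputable def planchAvg (n : ℕ) (φ : YoungDiagram → ℝ) : ℝ :=
  (∑' μ : {μ : YoungDiagram // μ.card = n}, (sytCount μ.1 : ℝ) ^ 2 * φ μ.1) / n.factorial

end PaperStmt

/-!
Write `f_λ` for the number of standard tableaux and `C(λ) = ∑_{u ∈ λ} c_u`. The largest entry
of a standard tableau sits in a removable corner, so `f_λ = ∑_r f_{λ - r}` over removable cells
`r`, and hence `∑_{λ ⊢ n+1} f_λ² φ(λ) = ∑_{μ ⊢ n} f_μ ∑_b f_{μ+b} φ(μ + b)` over addable cells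
`b`. As `C(μ + b) = C(μ) + c_b`, the theorem follows by induction on `n` from
`∑_b f_{μ+b} = (n+1) f_μ`, `∑_b c_b f_{μ+b} = 0` and `∑_b c_b² f_{μ+b} = n(n+1) f_μ`.

These moments come from the commutation relation
`∑_b w(c_b) f_{μ+b} = (∑_b w(c_b) - ∑_r w(c_r)) f_μ + ∑_r ∑_{b'} w(c_{b'}) f_{μ-r+b'}`
(branch `f_{μ+b}` and note that removing `r ≠ b` commutes with adding `b`), together with
`∑_b w(c_b) - ∑_r w(c_r) = w(0) + ∑_{u ∈ μ} (w(c_u + 1) + w(c_u - 1) - 2 w(c_u))`, which is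
checked row by row and equals `1`, `0`, `2n` for `w = 1, c, c²`.
-/

namespace Finset

variable {α : Type*} [PartialOrder α]

abbrev NaturalLabeling (s : Finset α) (n : ℕ) : Type _ :=
  {T : s → Fin n // Function.Bijective T ∧ StrictMono T}

namespace NaturalLabeling

variable {s : Finset α} {n : ℕ}

noncomputable def top (T : s.NaturalLabeling (n + 1)) : s :=
  (Equiv.ofBijective T.1 T.2.1).symm (Fin.last n)

lemma top_eq_iff (T : s.NaturalLabeling (n + 1)) (x : s) : T.top = x ↔ T.1 x = Fin.last n :=
  (Equiv.ofBijective T.1 T.2.1).symm_apply_eq.trans eq_comm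

lemma not_top_lt (T : s.NaturalLabeling (n + 1)) (x : s) : ¬ T.top < x := fun h =>
  (T.2.2 h).not_ge (by rw [(top_eq_iff T _).1 rfl]; exact Fin.le_last _)

variable [DecidableEq α] {m : α}

def restrict (hm : m ∈ s) (T : s.NaturalLabeling (n + 1)) (hT : T.1 ⟨m, hm⟩ = Fin.last n) :
    (s.erase m).NaturalLabeling n :=
  ⟨fun x => (T.1 ⟨x, mem_of_mem_erase x.2⟩).castPred fun h =>
    ne_of_mem_erase x.2 (congrArg Subtype.val (T.2.1.1 (h.trans hT.symm))), by
  refine ⟨⟨fun x y hxy => Subtype.ext (Subtype.mk.inj (T.2.1.1 (Fin.castPred_inj.1 hxy))),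
    fun y => ?_⟩, fun x y hxy => Fin.castPred_lt_castPred_iff.2 (T.2.2 hxy)⟩
  obtain ⟨x, hx⟩ := T.2.1.2 y.castSucc
  have hxm : (x : α) ≠ m := fun h =>
    Fin.castSucc_ne_last y (hx.symm.trans ((congrArg T.1 (Subtype.ext h)).trans hT))
  exact ⟨⟨x, mem_erase.2 ⟨hxm, x.2⟩⟩, by simp [hx]⟩⟩

def extend (hm : m ∈ s) (hmax : ∀ x ∈ s, ¬ m < x) (T : (s.erase m).NaturalLabeling n) :
    s.NaturalLabeling (n + 1) :=
  ⟨fun x => if h : x.1 = m then Fin.last n else (T.1 ⟨x, mem_erase.2 ⟨h, x.2⟩⟩).castSucc, by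
  refine ⟨⟨fun x y hxy => ?_, fun y => ?_⟩, fun x y hxy => ?_⟩
  · by_cases hx : x.1 = m <;> by_cases hy : y.1 = m <;>
      simp only [hx, hy, dite_true, dite_false] at hxy
    · exact Subtype.ext (hx.trans hy.symm)
    · exact absurd hxy.symm (Fin.castSucc_ne_last _)
    · exact absurd hxy (Fin.castSucc_ne_last _)
    · exact Subtype.ext (Subtype.mk.inj (T.2.1.1 (Fin.castSucc_inj.1 hxy)))
  · induction y using Fin.lastCases with
    | last => exact ⟨⟨m, hm⟩, dif_pos rfl⟩
    | cast z =>
      obtain ⟨x, hx⟩ := T.2.1.2 z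
      exact ⟨⟨x, mem_of_mem_erase x.2⟩, by simp [ne_of_mem_erase x.2, hx]⟩
  · have hx : x.1 ≠ m := fun h => hmax y y.2 (h ▸ hxy)
    by_cases hy : y.1 = m
    · simp [hx, hy]
    · simpa [hx, hy] using T.2.2 (show (⟨x, _⟩ : s.erase m) < ⟨y, _⟩ from hxy)⟩

def eraseMax (hm : m ∈ s) (hmax : ∀ x ∈ s, ¬ m < x) :
    {T : s.NaturalLabeling (n + 1) // T.1 ⟨m, hm⟩ = Fin.last n} ≃
      (s.erase m).NaturalLabeling n where
  toFun T := restrict hm T.1 T.2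
  invFun T := ⟨extend hm hmax T, dif_pos rfl⟩
  left_inv T := by
    ext x : 3
    by_cases hx : x.1 = m
    · simpa [restrict, extend, hx] using T.2.symm.trans (congrArg _ (Subtype.ext hx.symm))
    · simp [restrict, extend, hx]
  right_inv T := by
    ext x : 3
    simp [restrict, extend, ne_of_mem_erase x.2]

end NaturalLabeling

open Classical in
theorem card_naturalLabeling_succ [DecidableEq α] (s : Finset α) (n : ℕ) :
    Nat.card (s.NaturalLabeling (n + 1)) =
      ∑ m ∈ s with ∀ x ∈ s, ¬ m < x, Nat.card ((s.erase m).NaturalLabeling n) := by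
  rw [← Nat.card_congr (Equiv.sigmaFiberEquiv NaturalLabeling.top), Nat.card_sigma, sum_filter,
    ← sum_coe_sort s]
  refine Fintype.sum_congr _ _ fun x => ?_
  split_ifs with hmax
  · exact Nat.card_congr ((Equiv.subtypeEquivRight fun T => T.top_eq_iff x).trans
      (NaturalLabeling.eraseMax x.2 hmax))
  · have : IsEmpty {T : s.NaturalLabeling (n + 1) // T.top = x} :=
      ⟨fun T => hmax fun y hy hlt => T.1.not_top_lt ⟨y, hy⟩ (by rw [T.2]; exact hlt)⟩
    exact Nat.card_of_isEmpty

end Finset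

open Finset

namespace YoungDiagram

variable {μ : YoungDiagram} {b c r : ℕ × ℕ} {i j : ℕ}

def IsAddable (μ : YoungDiagram) (c : ℕ × ℕ) : Prop := c ∉ μ ∧ ∀ x < c, x ∈ μ

def IsRemovable (μ : YoungDiagram) (c : ℕ × ℕ) : Prop := c ∈ μ ∧ ∀ x ∈ μ, ¬ c < x

lemma IsAddable.isLowerSet_insert (h : μ.IsAddable c) :
    IsLowerSet (insert c (μ.cells : Set (ℕ × ℕ))) := by
  rintro x y hyx (rfl | hx)
  · rcases hyx.lt_or_eq with hlt | rfl
    · exact Or.inr ((mem_cells _).2 (h.2 y hlt))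
    · exact Or.inl rfl
  · exact Or.inr (μ.isLowerSet hyx hx)

lemma IsRemovable.isLowerSet_erase (h : μ.IsRemovable c) :
    IsLowerSet ((μ.cells.erase c : Finset (ℕ × ℕ)) : Set (ℕ × ℕ)) := by
  rw [coe_erase]
  exact μ.isLowerSet.erase fun x hx hcx => (hcx.lt_or_eq.resolve_left (h.2 x hx)).symm

open Classical in
/-- Junk value `μ` if `c` is not addable. -/
noncomputable def addCell (μ : YoungDiagram) (c : ℕ × ℕ) : YoungDiagram :=
  if h : μ.IsAddable c then ⟨insert c μ.cells, by simpa using h.isLowerSet_insert⟩ else μ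

open Classical in
/-- Junk value `μ` if `c` is not removable. -/
noncomputable def removeCell (μ : YoungDiagram) (c : ℕ × ℕ) : YoungDiagram :=
  if h : μ.IsRemovable c then ⟨μ.cells.erase c, h.isLowerSet_erase⟩ else μ

lemma cells_addCell (h : μ.IsAddable c) : (μ.addCell c).cells = insert c μ.cells := by
  simp [addCell, h]

lemma cells_removeCell (h : μ.IsRemovable c) : (μ.removeCell c).cells = μ.cells.erase c := by
  simp [removeCell, h]

lemma mem_addCell (h : μ.IsAddable c) {x : ℕ × ℕ} :
    x ∈ μ.addCell c ↔ x = c ∨ x ∈ μ := by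
  rw [← mem_cells, cells_addCell h, mem_insert, mem_cells]

lemma mem_removeCell (h : μ.IsRemovable c) {x : ℕ × ℕ} :
    x ∈ μ.removeCell c ↔ x ≠ c ∧ x ∈ μ := by
  rw [← mem_cells, cells_removeCell h, mem_erase, mem_cells]

lemma card_addCell (h : μ.IsAddable c) : (μ.addCell c).card = μ.card + 1 := by
  rw [YoungDiagram.card, cells_addCell h, card_insert_of_notMem (by simpa using h.1)]

lemma card_removeCell (h : μ.IsRemovable c) : (μ.removeCell c).card + 1 = μ.card := by
  rw [YoungDiagram.card, cells_removeCell h, card_erase_add_one (by simpa using h.1)]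

lemma IsAddable.isRemovable_addCell (h : μ.IsAddable c) : (μ.addCell c).IsRemovable c := by
  refine ⟨(mem_addCell h).2 (Or.inl rfl), fun x hx hcx => ?_⟩
  rcases (mem_addCell h).1 hx with rfl | hx
  · exact hcx.false
  · exact h.1 (μ.isLowerSet hcx.le hx)

lemma IsRemovable.isAddable_removeCell (h : μ.IsRemovable c) : (μ.removeCell c).IsAddable c := by
  refine ⟨fun hc => ((mem_removeCell h).1 hc).1 rfl, fun x hxc => ?_⟩
  exact (mem_removeCell h).2 ⟨hxc.ne, μ.isLowerSet hxc.le h.1⟩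

lemma removeCell_addCell (h : μ.IsAddable c) : (μ.addCell c).removeCell c = μ :=
  YoungDiagram.ext <| by
    rw [cells_removeCell h.isRemovable_addCell, cells_addCell h, erase_insert (by simpa using h.1)]

lemma addCell_removeCell (h : μ.IsRemovable c) : (μ.removeCell c).addCell c = μ :=
  YoungDiagram.ext <| by
    rw [cells_addCell h.isAddable_removeCell, cells_removeCell h, insert_erase (by simpa using h.1)]

lemma isAddable_and_isRemovable_addCell_iff (hbr : b ≠ r) :
    μ.IsAddable b ∧ (μ.addCell b).IsRemovable r ↔
      μ.IsRemovable r ∧ (μ.removeCell r).IsAddable b := by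
  constructor
  · rintro ⟨hb, hrμ, hrmax⟩
    have hr : μ.IsRemovable r :=
      ⟨((mem_addCell hb).1 hrμ).resolve_left hbr.symm,
        fun x hx => hrmax x ((mem_addCell hb).2 (Or.inr hx))⟩
    refine ⟨hr, fun hbμ => hb.1 ((mem_removeCell hr).1 hbμ).2, fun x hxb => ?_⟩
    refine (mem_removeCell hr).2 ⟨?_, hb.2 x hxb⟩
    rintro rfl
    exact hrmax b ((mem_addCell hb).2 (Or.inl rfl)) hxb
  · rintro ⟨hr, hbμ, hbmin⟩
    have hb : μ.IsAddable b :=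
      ⟨fun h => hbμ ((mem_removeCell hr).2 ⟨hbr, h⟩),
        fun x hxb => ((mem_removeCell hr).1 (hbmin x hxb)).2⟩
    refine ⟨hb, (mem_addCell hb).2 (Or.inr hr.1), fun x hx hrx => ?_⟩
    rcases (mem_addCell hb).1 hx with rfl | hx
    · exact ((mem_removeCell hr).1 (hbmin r hrx)).1 rfl
    · exact hr.2 x hx hrx

lemma removeCell_addCell_comm (hbr : b ≠ r) (hb : μ.IsAddable b)
    (hr : (μ.addCell b).IsRemovable r) :
    (μ.addCell b).removeCell r = (μ.removeCell r).addCell b := by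
  obtain ⟨hr', hb'⟩ := (isAddable_and_isRemovable_addCell_iff hbr).1 ⟨hb, hr⟩
  exact YoungDiagram.ext <| by
    rw [cells_removeCell hr, cells_addCell hb, cells_addCell hb', cells_removeCell hr',
      erase_insert_of_ne hbr]

lemma isAddable_iff_rowLen :
    μ.IsAddable (i, j) ↔ j = μ.rowLen i ∧ (i = 0 ∨ μ.rowLen i < μ.rowLen (i - 1)) := by
  rw [IsAddable, mem_iff_lt_rowLen, not_lt]
  constructor
  · rintro ⟨hij, hlt⟩
    have hj : j ≤ μ.rowLen i := by
      rcases j.eq_zero_or_pos with rfl | hj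
      · exact Nat.zero_le _
      · have := mem_iff_lt_rowLen.1 (hlt (i, j - 1) (Prod.mk_lt_mk_of_le_of_lt le_rfl (by omega)))
        omega
    refine ⟨le_antisymm hj hij, ?_⟩
    rcases i.eq_zero_or_pos with rfl | hi
    · exact Or.inl rfl
    · have := mem_iff_lt_rowLen.1 (hlt (i - 1, j) (Prod.mk_lt_mk_of_lt_of_le (by omega) le_rfl))
      omega
  · rintro ⟨rfl, hi⟩
    refine ⟨le_rfl, fun ⟨x, y⟩ hxy => mem_iff_lt_rowLen.2 ?_⟩
    rcases Prod.lt_iff.1 hxy with ⟨hx, hy⟩ | ⟨hx, hy⟩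
    · have := μ.rowLen_anti x (i - 1) (by omega)
      omega
    · exact hy.trans_le (μ.rowLen_anti _ _ hx)

lemma isRemovable_iff_rowLen :
    μ.IsRemovable (i, j) ↔ j + 1 = μ.rowLen i ∧ μ.rowLen (i + 1) < μ.rowLen i := by
  rw [IsRemovable, mem_iff_lt_rowLen]
  constructor
  · rintro ⟨hj, hmax⟩
    have hright := hmax (i, j + 1) |>.mt (not_not.2 (Prod.mk_lt_mk_of_le_of_lt le_rfl j.lt_add_one))
    have hdown := hmax (i + 1, j) |>.mt (not_not.2 (Prod.mk_lt_mk_of_lt_of_le i.lt_add_one le_rfl))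
    rw [mem_iff_lt_rowLen] at hright hdown
    omega
  · rintro ⟨hj, hlt⟩
    refine ⟨by omega, fun ⟨x, y⟩ hxy hlt' => ?_⟩
    rw [mem_iff_lt_rowLen] at hxy
    rcases Prod.lt_iff.1 hlt' with ⟨hx, hy⟩ | ⟨hx, hy⟩ <;> dsimp only at hx hy
    · have := μ.rowLen_anti (i + 1) x hx
      omega
    · rcases hx.lt_or_eq with hx | rfl
      · have := μ.rowLen_anti (i + 1) x hx
        omega
      · omega

lemma strictMono_iff_row_col {β : Type*} [Preorder β] (T : μ.cells → β) :
    StrictMono T ↔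
      (∀ c d : μ.cells, (c : ℕ × ℕ).1 = (d : ℕ × ℕ).1 → (c : ℕ × ℕ).2 < (d : ℕ × ℕ).2 →
        T c < T d) ∧
      (∀ c d : μ.cells, (c : ℕ × ℕ).2 = (d : ℕ × ℕ).2 → (c : ℕ × ℕ).1 < (d : ℕ × ℕ).1 →
        T c < T d) := by
  refine ⟨fun hT => ⟨fun c d h1 h2 => hT (Prod.lt_iff.2 (Or.inr ⟨h1.le, h2⟩)),
    fun c d h1 h2 => hT (Prod.lt_iff.2 (Or.inl ⟨h2, h1.le⟩))⟩, fun ⟨hrow, hcol⟩ => ?_⟩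
  rintro ⟨⟨c1, c2⟩, hc⟩ ⟨⟨d1, d2⟩, hd⟩ hcd
  obtain ⟨h1, h2⟩ : c1 ≤ d1 ∧ c2 ≤ d2 := Prod.mk_le_mk.1 hcd.le
  -- go through the cell `(c1, d2)`, in the row of the first cell and the column of the second
  have hk : (c1, d2) ∈ μ.cells := (mem_cells _).2 (μ.up_left_mem h1 le_rfl ((mem_cells _).1 hd))
  rcases h2.lt_or_eq with h2 | rfl
  · have hck := hrow ⟨_, hc⟩ ⟨_, hk⟩ rfl h2
    rcases h1.lt_or_eq with h1 | rfl
    · exact hck.trans (hcol ⟨_, hk⟩ ⟨_, hd⟩ rfl h1)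
    · exact hck
  · exact hcol ⟨_, hc⟩ ⟨_, hd⟩ rfl (h1.lt_of_ne fun h => hcd.ne (by simp [h]))

def addableCells (μ : YoungDiagram) : Finset (ℕ × ℕ) :=
  {i ∈ range (μ.colLen 0 + 1) | i = 0 ∨ μ.rowLen i < μ.rowLen (i - 1)}.image
    fun i => (i, μ.rowLen i)

def removableCells (μ : YoungDiagram) : Finset (ℕ × ℕ) :=
  {i ∈ range (μ.colLen 0) | μ.rowLen (i + 1) < μ.rowLen i}.image fun i => (i, μ.rowLen i - 1)

lemma lt_colLen_zero_iff : i < μ.colLen 0 ↔ 0 < μ.rowLen i := by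
  rw [← mem_iff_lt_colLen, mem_iff_lt_rowLen]

lemma mem_addableCells : c ∈ μ.addableCells ↔ μ.IsAddable c := by
  obtain ⟨i, j⟩ := c
  simp only [addableCells, isAddable_iff_rowLen, mem_image, mem_filter, mem_range, Prod.mk.injEq]
  constructor
  · rintro ⟨i, ⟨-, hi⟩, rfl, rfl⟩
    exact ⟨rfl, hi⟩
  · rintro ⟨rfl, hi⟩
    refine ⟨i, ⟨?_, hi⟩, rfl, rfl⟩
    rcases hi with rfl | hi
    · omega
    · have := lt_colLen_zero_iff.2 (Nat.zero_lt_of_lt hi)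
      omega

lemma mem_removableCells : c ∈ μ.removableCells ↔ μ.IsRemovable c := by
  obtain ⟨i, j⟩ := c
  simp only [removableCells, isRemovable_iff_rowLen, mem_image, mem_filter, mem_range,
    Prod.mk.injEq]
  constructor
  · rintro ⟨i, ⟨-, hi⟩, rfl, rfl⟩
    exact ⟨by omega, hi⟩
  · rintro ⟨hj, hi⟩
    exact ⟨i, ⟨lt_colLen_zero_iff.2 (by omega), hi⟩, rfl, by omega⟩

lemma sum_cells_eq_sum_rowLen {M : Type*} [AddCommMonoid M] (μ : YoungDiagram)
    (f : ℕ × ℕ → M) :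
    ∑ c ∈ μ.cells, f c = ∑ i ∈ range (μ.colLen 0), ∑ j ∈ range (μ.rowLen i), f (i, j) :=
  sum_finset_product _ _ _ fun ⟨i, j⟩ => by
    rw [mem_cells, mem_range, mem_range, lt_colLen_zero_iff, mem_iff_lt_rowLen]
    exact ⟨fun h => ⟨Nat.zero_lt_of_lt h, h⟩, And.right⟩

lemma finite_setOf_card_eq (n : ℕ) : {μ : YoungDiagram | μ.card = n}.Finite := by
  refine Set.Finite.of_finite_image (f := cells) ?_ fun μ _ ν _ h => YoungDiagram.ext h
  refine (range n ×ˢ range n).powerset.finite_toSet.subset ?_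
  rintro _ ⟨μ, rfl, rfl⟩
  rw [mem_coe, mem_powerset]
  rintro ⟨i, j⟩ hc
  rw [mem_cells] at hc
  have hcol : μ.colLen j ≤ μ.card := μ.colLen_eq_card ▸ card_filter_le _ _
  have hrow : μ.rowLen i ≤ μ.card := μ.rowLen_eq_card ▸ card_filter_le _ _
  rw [mem_product, mem_range, mem_range]
  exact ⟨(mem_iff_lt_colLen.1 hc).trans_le hcol, (mem_iff_lt_rowLen.1 hc).trans_le hrow⟩

noncomputable def ofCard (n : ℕ) : Finset YoungDiagram := (finite_setOf_card_eq n).toFinset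

lemma mem_ofCard {n : ℕ} : μ ∈ ofCard n ↔ μ.card = n := Set.Finite.mem_toFinset _

lemma ofCard_zero : ofCard 0 = {⊥} := by
  ext μ
  rw [mem_ofCard, mem_singleton]
  exact ⟨fun h => YoungDiagram.ext (card_eq_zero.1 h), fun h => h ▸ rfl⟩

theorem sum_ofCard_succ_removableCells {M : Type*} [AddCommMonoid M] (n : ℕ)
    (φ : YoungDiagram → ℕ × ℕ → M) :
    ∑ ν ∈ ofCard (n + 1), ∑ r ∈ ν.removableCells, φ (ν.removeCell r) r =
      ∑ μ ∈ ofCard n, ∑ b ∈ μ.addableCells, φ μ b := by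
  rw [sum_sigma', sum_sigma']
  refine sum_nbij' (fun p => ⟨p.1.removeCell p.2, p.2⟩) (fun p => ⟨p.1.addCell p.2, p.2⟩)
    ?_ ?_ ?_ ?_ fun _ _ => rfl
  · rintro ⟨ν, r⟩ h
    simp only [mem_sigma, mem_ofCard, mem_removableCells, mem_addableCells] at h ⊢
    obtain ⟨hν, hr⟩ := h
    exact ⟨by have := card_removeCell hr; omega, hr.isAddable_removeCell⟩
  · rintro ⟨μ, b⟩ h
    simp only [mem_sigma, mem_ofCard, mem_removableCells, mem_addableCells] at h ⊢
    obtain ⟨hμ, hb⟩ := h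
    exact ⟨by rw [card_addCell hb, hμ], hb.isRemovable_addCell⟩
  · simp only [mem_sigma, mem_removableCells]
    rintro ⟨ν, r⟩ ⟨-, hr⟩
    simp [addCell_removeCell hr]
  · simp only [mem_sigma, mem_addableCells]
    rintro ⟨μ, b⟩ ⟨-, hb⟩
    simp [removeCell_addCell hb]

end YoungDiagram

namespace PaperStmt

open YoungDiagram

variable {μ : YoungDiagram}

lemma sytCount_eq_card_naturalLabeling (μ : YoungDiagram) :
    sytCount μ = Nat.card (μ.cells.NaturalLabeling μ.card) :=
  Nat.card_congr (Equiv.subtypeEquivRight fun T => and_congr_right' (strictMono_iff_row_col T).symm)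

theorem sytCount_eq_sum_removableCells (hμ : μ.card ≠ 0) :
    sytCount μ = ∑ r ∈ μ.removableCells, sytCount (μ.removeCell r) := by
  obtain ⟨n, hn⟩ := Nat.exists_eq_succ_of_ne_zero hμ
  rw [sytCount_eq_card_naturalLabeling, hn, card_naturalLabeling_succ]
  refine sum_congr (ext fun r => ?_) fun r hr => ?_
  · simp [mem_removableCells, IsRemovable]
  · have hr := mem_removableCells.1 hr
    have hcard : (μ.removeCell r).card = n := by have := card_removeCell hr; omega
    rw [sytCount_eq_card_naturalLabeling, hcard, cells_removeCell hr]

section cornerSum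

variable {G : Type*} [AddCommGroup G] (w : ℤ → G) (μ : YoungDiagram)

def cornerSum : G :=
  ∑ b ∈ μ.addableCells, w (content b) - ∑ r ∈ μ.removableCells, w (content r)

lemma sum_addableCells_eq_sum_range :
    ∑ b ∈ μ.addableCells, w (content b) = w (content (0, μ.rowLen 0)) +
      ∑ i ∈ range (μ.colLen 0),
        if μ.rowLen (i + 1) < μ.rowLen i then w (content (i + 1, μ.rowLen (i + 1))) else 0 := by
  rw [addableCells, sum_image fun i _ k _ h => (Prod.mk.inj h).1, sum_filter, sum_range_succ',
    add_comm]
  simp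

lemma sum_removableCells_eq_sum_range :
    ∑ r ∈ μ.removableCells, w (content r) = ∑ i ∈ range (μ.colLen 0),
      if μ.rowLen (i + 1) < μ.rowLen i then w (content (i, μ.rowLen i) - 1) else 0 := by
  rw [removableCells, sum_image fun i _ k _ h => (Prod.mk.inj h).1, sum_filter]
  refine sum_congr rfl fun i _ => if_ctx_congr Iff.rfl (fun h => ?_) fun _ => rfl
  congr 1
  simp only [content]
  omega

lemma sum_cells_secondDiff_eq_sum_range :
    ∑ u ∈ μ.cells, (w (content u + 1) + w (content u - 1) - 2 • w (content u)) =
      ∑ i ∈ range (μ.colLen 0),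
        ((w (content (i, μ.rowLen i)) - w (content (i, μ.rowLen i) - 1)) -
          (w (content (i, 0)) - w (content (i, 0) - 1))) := by
  rw [sum_cells_eq_sum_rowLen]
  refine sum_congr rfl fun i _ => (sum_congr rfl fun j _ => ?_).trans
    (sum_range_sub (fun j => w (content (i, j)) - w (content (i, j) - 1)) _)
  have : content (i, j + 1) = content (i, j) + 1 := by simp only [content]; push_cast; ring
  rw [this, add_sub_cancel_right]
  abel

theorem cornerSum_eq :
    cornerSum w μ =
      w 0 + ∑ u ∈ μ.cells, (w (content u + 1) + w (content u - 1) - 2 • w (content u)) := by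
  -- if rows `i` and `i + 1` have equal length, the unconditional difference vanishes as well
  have hstep : ∀ i, ((if μ.rowLen (i + 1) < μ.rowLen i then
      w (content (i + 1, μ.rowLen (i + 1))) else 0) -
        if μ.rowLen (i + 1) < μ.rowLen i then w (content (i, μ.rowLen i) - 1) else 0) =
      w (content (i + 1, μ.rowLen (i + 1))) - w (content (i, μ.rowLen i) - 1) := by
    intro i
    split_ifs with h
    · rfl
    · have : μ.rowLen (i + 1) = μ.rowLen i :=
        le_antisymm (μ.rowLen_anti _ _ i.le_succ) (not_lt.1 h)
      rw [sub_zero, eq_comm, sub_eq_zero, content, content, this]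
      push_cast
      ring_nf
  have hlast : content (μ.colLen 0, μ.rowLen (μ.colLen 0)) = content (μ.colLen 0, 0) := by
    rw [Nat.eq_zero_of_not_pos (mt lt_colLen_zero_iff.2 (lt_irrefl _))]
  have hcol : ∀ i : ℕ, content (i + 1, 0) = content (i, 0) - 1 := fun i => by
    simp only [content]; push_cast; ring
  have ht1 := sum_range_sub (fun i => w (content (i, μ.rowLen i))) (μ.colLen 0)
  have ht2 := sum_range_sub (fun i => w (content (i, 0))) (μ.colLen 0)
  simp only [hcol, sum_sub_distrib, sub_eq_iff_eq_add] at ht1 ht2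
  rw [cornerSum, sum_addableCells_eq_sum_range, sum_removableCells_eq_sum_range,
    sum_cells_secondDiff_eq_sum_range, add_sub_assoc, ← sum_sub_distrib,
    sum_congr rfl fun i _ => hstep i]
  simp only [sum_sub_distrib]
  rw [ht1, ht2, hlast, show content (0, 0) = 0 from rfl]
  abel

end cornerSum

variable {R : Type*} [CommRing R]

/-- `(|μ| + 1) f_μ` times the `w`-moment of the transition measure of `μ`. -/
noncomputable def transitionSum (w : ℤ → R) (μ : YoungDiagram) : R :=
  ∑ b ∈ μ.addableCells, w (content b) * sytCount (μ.addCell b)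

theorem transitionSum_eq (w : ℤ → R) (μ : YoungDiagram) :
    transitionSum w μ =
      cornerSum w μ * sytCount μ +
        ∑ r ∈ μ.removableCells, transitionSum w (μ.removeCell r) := by
  -- in the branching rule for `μ + b` the term `r = b` gives `f_μ`
  have hsplit : ∀ b ∈ μ.addableCells, w (content b) * (sytCount (μ.addCell b) : R) =
      w (content b) * sytCount μ + ∑ r ∈ (μ.addCell b).removableCells.erase b,
        w (content b) * sytCount ((μ.addCell b).removeCell r) := by
    intro b hb
    have hb := mem_addableCells.1 hb
    rw [sytCount_eq_sum_removableCells (by simp [card_addCell hb]), Nat.cast_sum, mul_sum,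
      ← add_sum_erase _ _ (mem_removableCells.2 hb.isRemovable_addCell), removeCell_addCell hb]
  have hswap : ∑ b ∈ μ.addableCells, ∑ r ∈ (μ.addCell b).removableCells.erase b,
      w (content b) * (sytCount ((μ.addCell b).removeCell r) : R) =
      ∑ r ∈ μ.removableCells, ∑ b ∈ (μ.removeCell r).addableCells.erase r,
        w (content b) * sytCount ((μ.removeCell r).addCell b) := by
    refine (sum_congr rfl fun b hb => sum_congr rfl fun r hr => ?_).trans (sum_comm' fun b r => ?_)
    · rw [mem_erase, mem_removableCells] at hr
      rw [removeCell_addCell_comm hr.1.symm (mem_addableCells.1 hb) hr.2]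
    · simp only [mem_erase, mem_addableCells, mem_removableCells]
      by_cases hbr : b = r
      · simp [hbr]
      · have := isAddable_and_isRemovable_addCell_iff (μ := μ) hbr
        tauto
  have hrem : ∀ r ∈ μ.removableCells, ∑ b ∈ (μ.removeCell r).addableCells.erase r,
      w (content b) * (sytCount ((μ.removeCell r).addCell b) : R) =
      transitionSum w (μ.removeCell r) - w (content r) * sytCount μ := by
    intro r hr
    have hr := mem_removableCells.1 hr
    rw [transitionSum, sum_erase_eq_sub (mem_addableCells.2 hr.isAddable_removeCell),
      addCell_removeCell hr]
  rw [transitionSum, sum_congr rfl hsplit, sum_add_distrib, ← sum_mul, hswap, sum_congr rfl hrem,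
    sum_sub_distrib, ← sum_mul, cornerSum]
  ring

theorem transitionSum_eq_sum_mul (w : ℤ → R) (a : ℕ → R)
    (ha : ∀ ν : YoungDiagram, cornerSum w ν = a ν.card) (μ : YoungDiagram) :
    transitionSum w μ = (∑ k ∈ range (μ.card + 1), a k) * sytCount μ := by
  induction h : μ.card generalizing μ with
  | zero =>
    have hempty : μ.removableCells = ∅ := eq_empty_of_forall_notMem fun r hr => by
      simpa [card_eq_zero.1 h] using (mem_cells r).2 (mem_removableCells.1 hr).1
    rw [transitionSum_eq, ha, h, hempty]
    simp
  | succ n ih =>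
    have hrem : ∀ r ∈ μ.removableCells, transitionSum w (μ.removeCell r) =
        (∑ k ∈ range (n + 1), a k) * sytCount (μ.removeCell r) := fun r hr =>
      ih _ (by have := card_removeCell (mem_removableCells.1 hr); omega)
    rw [transitionSum_eq, ha, h, sum_congr rfl hrem, ← mul_sum, ← Nat.cast_sum,
      ← sytCount_eq_sum_removableCells (by omega), sum_range_succ _ (n + 1)]
    ring

theorem transitionSum_one (μ : YoungDiagram) :
    transitionSum (fun _ => (1 : R)) μ = (μ.card + 1) * sytCount μ := by
  rw [transitionSum_eq_sum_mul _ (fun _ => 1) fun ν => by simp [cornerSum_eq]; ring]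
  simp

theorem transitionSum_content (μ : YoungDiagram) : transitionSum (fun c => (c : R)) μ = 0 := by
  rw [transitionSum_eq_sum_mul _ (fun _ => 0) fun ν => ?_]
  · simp
  · rw [cornerSum_eq]
    simp only [Int.cast_zero, zero_add]
    exact sum_eq_zero fun u _ => by push_cast; ring

theorem transitionSum_content_sq (μ : YoungDiagram) :
    transitionSum (fun c => (c : R) ^ 2) μ = μ.card * (μ.card + 1) * sytCount μ := by
  rw [transitionSum_eq_sum_mul _ (fun k => 2 * (k : R)) fun ν => ?_]
  · congr 1
    induction μ.card with
    | zero => simp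
    | succ n ih =>
      rw [sum_range_succ, ih]
      push_cast
      ring
  · rw [cornerSum_eq, sum_congr rfl fun u _ => show _ = (2 : R) by push_cast; ring]
    simp [mul_comm]

lemma sytCount_bot : sytCount ⊥ = 1 := by
  rw [sytCount_eq_card_naturalLabeling, Nat.card_eq_one_iff_unique]
  have : IsEmpty (⊥ : YoungDiagram).cells := ⟨fun x => notMem_bot _ ((mem_cells _).1 x.2)⟩
  exact ⟨⟨fun T T' => Subtype.ext (funext isEmptyElim)⟩,
    ⟨⟨isEmptyElim, ⟨isEmptyElim, fun y => y.elim0⟩, isEmptyElim⟩⟩⟩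

theorem sum_ofCard_succ_sytCount_sq_mul (n : ℕ) (φ : YoungDiagram → R) :
    ∑ ν ∈ ofCard (n + 1), (sytCount ν : R) ^ 2 * φ ν =
      ∑ μ ∈ ofCard n, (sytCount μ : R) *
        ∑ b ∈ μ.addableCells, sytCount (μ.addCell b) * φ (μ.addCell b) := by
  simp_rw [mul_sum]
  rw [← sum_ofCard_succ_removableCells n fun μ b =>
    (sytCount μ : R) * (sytCount (μ.addCell b) * φ (μ.addCell b))]
  refine sum_congr rfl fun ν hν => ?_
  have hbranch : (sytCount ν : R) = ∑ r ∈ ν.removableCells, (sytCount (ν.removeCell r) : R) := by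
    rw [sytCount_eq_sum_removableCells (by rw [mem_ofCard.1 hν]; exact n.succ_ne_zero),
      Nat.cast_sum]
  calc (sytCount ν : R) ^ 2 * φ ν
      = (∑ r ∈ ν.removableCells, (sytCount (ν.removeCell r) : R)) * (sytCount ν * φ ν) := by
        rw [← hbranch]; ring
    _ = _ := by
        rw [sum_mul]
        exact sum_congr rfl fun r hr => by rw [addCell_removeCell (mem_removableCells.1 hr)]

theorem sum_ofCard_sytCount_sq (n : ℕ) :
    ∑ μ ∈ ofCard n, (sytCount μ : R) ^ 2 = n.factorial := by
  induction n with
  | zero => simp [ofCard_zero, sytCount_bot]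
  | succ n ih =>
    have h := sum_ofCard_succ_sytCount_sq_mul n fun _ => (1 : R)
    simp only [mul_one] at h
    rw [h, Nat.factorial_succ, Nat.cast_mul, ← ih, mul_sum]
    refine sum_congr rfl fun μ hμ => ?_
    have h1 := transitionSum_one (R := R) μ
    simp only [transitionSum, one_mul] at h1
    rw [h1, mem_ofCard.1 hμ]
    push_cast
    ring

def contentSum (μ : YoungDiagram) : ℤ := ∑ c ∈ μ.cells, content c

lemma contentSum_addCell {b : ℕ × ℕ} (hb : μ.IsAddable b) :
    contentSum (μ.addCell b) = contentSum μ + content b := by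
  rw [contentSum, cells_addCell hb, sum_insert (by simpa using hb.1), contentSum, add_comm]

theorem sum_addableCells_sytCount_mul_contentSum_sq (μ : YoungDiagram) :
    ∑ b ∈ μ.addableCells, (sytCount (μ.addCell b) : R) * (contentSum (μ.addCell b) : R) ^ 2 =
      (μ.card + 1) * sytCount μ * (contentSum μ : R) ^ 2 + μ.card * (μ.card + 1) * sytCount μ := by
  calc ∑ b ∈ μ.addableCells, (sytCount (μ.addCell b) : R) * (contentSum (μ.addCell b) : R) ^ 2
      = (contentSum μ : R) ^ 2 * transitionSum (fun _ => 1) μ +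
          2 * contentSum μ * transitionSum (fun c => (c : R)) μ +
          transitionSum (fun c => (c : R) ^ 2) μ := by
        simp only [transitionSum, mul_sum, ← sum_add_distrib]
        refine sum_congr rfl fun b hb => ?_
        rw [contentSum_addCell (mem_addableCells.1 hb)]
        push_cast
        ring
    _ = _ := by
        rw [transitionSum_one, transitionSum_content, transitionSum_content_sq]
        ring

theorem two_mul_sum_ofCard_sytCount_sq_mul_contentSum_sq (n : ℕ) :
    2 * ∑ μ ∈ ofCard n, (sytCount μ : R) ^ 2 * (contentSum μ : R) ^ 2 =
      n.factorial * n * (n - 1) := by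
  induction n with
  | zero => simp [ofCard_zero, contentSum]
  | succ n ih =>
    have hstep : ∀ μ ∈ ofCard n, (sytCount μ : R) *
        ∑ b ∈ μ.addableCells, sytCount (μ.addCell b) * (contentSum (μ.addCell b) : R) ^ 2 =
        (n + 1) * ((sytCount μ : R) ^ 2 * (contentSum μ : R) ^ 2) +
          n * (n + 1) * (sytCount μ : R) ^ 2 := fun μ hμ => by
      rw [sum_addableCells_sytCount_mul_contentSum_sq, mem_ofCard.1 hμ]
      ring
    rw [sum_ofCard_succ_sytCount_sq_mul, sum_congr rfl hstep, sum_add_distrib, ← mul_sum,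
      ← mul_sum, sum_ofCard_sytCount_sq, Nat.factorial_succ]
    push_cast
    linear_combination (n + 1 : R) * ih

lemma planchAvg_eq_sum (n : ℕ) (φ : YoungDiagram → ℝ) :
    planchAvg n φ = (∑ μ ∈ ofCard n, (sytCount μ : ℝ) ^ 2 * φ μ) / n.factorial := by
  rw [planchAvg, ← Finset.tsum_subtype]
  exact congrArg (· / _) (Equiv.tsum_eq (Equiv.subtypeEquivRight fun μ => mem_ofCard) _).symm

/-- The Plancherel average of `(∑_{u∈λ} c_u)²` over partitions of `n` is `n(n-1)/2`. -/
theorem stmt2 (n : ℕ) :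
    planchAvg n (fun μ => (((∑ c ∈ μ.cells, content c : ℤ) : ℝ)) ^ 2)
      = (n : ℝ) * ((n : ℝ) - 1) / 2 := by
  change planchAvg n (fun μ => ((contentSum μ : ℤ) : ℝ) ^ 2) = _
  have h := two_mul_sum_ofCard_sytCount_sq_mul_contentSum_sq (R := ℝ) n
  rw [planchAvg_eq_sum, div_eq_div_iff (by positivity) two_ne_zero]
  linear_combination h

end PaperStmt
end

section
/- For every natural number n, ∑_{r=0}^{n} ((−1)^r / (1 − 2r)) · binom(2r, r) · binom(n + r, 2r + 1) = n². (Equivalently, for every positive integer x one has x = 1 + ∑_{r≥1} binom(2r,r) · (−1)^r / ((1−2r)(2r+1)!) · p(x,r), where p(x,r) := ∏_{i=1}^r (x² − i²) and the sum terminates because p(x,r) = 0 for r ≥ x.) -/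
/-!
Write `F n r` for the summand and `S n = ∑ r, F n r`. Zeilberger's method finds a certificate
`G`, a rational-function multiple of `F`, with
`n² F (n+1) r - (n+1)² F n r = G n (r+1) - G n r`. Summing over `r` telescopes to
`n² S (n+1) = (n+1)² S n`, so `S n / n²` is constant for `n ≥ 1`, and `S 1 = 1`.
-/

open Finset

namespace PaperStmt

lemma cast_choose_succ_right {K : Type*} [Field K] [CharZero K] (m k : ℕ) :
    (m.choose (k + 1) : K) = m.choose k * (m - k) / (k + 1) := by
  rw [eq_div_iff (Nat.cast_add_one_ne_zero k)]
  rcases le_or_gt k m with hkm | hmk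
  · exact_mod_cast congrArg (Nat.cast : ℕ → K) (Nat.choose_succ_right_eq m k)
  · simp [Nat.choose_eq_zero_of_lt hmk, Nat.choose_eq_zero_of_lt (hmk.trans k.lt_succ_self)]

lemma one_sub_two_mul_natCast_ne_zero {R : Type*} [NonAssocRing R] [CharZero R] (r : ℕ) :
    (1 - 2 * r : R) ≠ 0 := by
  rw [sub_ne_zero]
  exact_mod_cast (by omega : 1 ≠ 2 * r)

def summand (n r : ℕ) : ℚ :=
  (-1) ^ r / (1 - 2 * r) * (2 * r).choose r * (n + r).choose (2 * r + 1)

def wzCertificate (n r : ℕ) : ℚ :=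
  -(-1) ^ r * r ^ 2 * (2 * r).choose r * (n + r).choose (2 * r) / (1 - 2 * r)

lemma summand_eq_zero_of_le {n r : ℕ} (h : n ≤ r) : summand n r = 0 := by
  simp [summand, Nat.choose_eq_zero_of_lt (by omega : n + r < 2 * r + 1)]

lemma summand_wz (n r : ℕ) :
    (n : ℚ) ^ 2 * summand (n + 1) r - (n + 1) ^ 2 * summand n r
      = wzCertificate n (r + 1) - wzCertificate n r := by
  have pascal₁ : (n + 1 + r).choose (2 * r + 1)
      = (n + r).choose (2 * r) + (n + r).choose (2 * r + 1) := by
    rw [Nat.add_right_comm, Nat.choose_succ_succ]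
  have pascal₂ : (n + (r + 1)).choose (2 * (r + 1))
      = (n + r).choose (2 * r + 1) + (n + r).choose (2 * r + 1 + 1) := by
    rw [← Nat.add_assoc, Nat.mul_succ, Nat.choose_succ_succ]
  have central : ((2 * (r + 1)).choose (r + 1) : ℚ)
      = 2 * (2 * r + 1) * (2 * r).choose r / (r + 1) := by
    rw [eq_div_iff (by positivity)]
    exact_mod_cast (Nat.mul_comm _ _).trans (Nat.succ_mul_centralBinom_succ r)
  have h₀ := one_sub_two_mul_natCast_ne_zero (R := ℚ) r
  have h₁ := one_sub_two_mul_natCast_ne_zero (R := ℚ) (r + 1)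
  simp only [summand, wzCertificate, pascal₁, pascal₂, Nat.cast_add, central]
  rw [cast_choose_succ_right (n + r) (2 * r + 1), cast_choose_succ_right (n + r) (2 * r)]
  push_cast at *
  field_simp
  ring

lemma sum_summand_recurrence (n : ℕ) :
    (n : ℚ) ^ 2 * ∑ r ∈ range (n + 2), summand (n + 1) r
      = (n + 1) ^ 2 * ∑ r ∈ range (n + 1), summand n r := by
  have telescope : ∑ r ∈ range (n + 1), (wzCertificate n (r + 1) - wzCertificate n r) = 0 := by
    rw [sum_range_sub]
    simp [wzCertificate, Nat.choose_eq_zero_of_lt (by omega : n + (n + 1) < 2 * (n + 1))]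
  rw [sum_range_succ, summand_eq_zero_of_le le_rfl, add_zero, mul_sum, mul_sum,
    ← sub_eq_zero, ← sum_sub_distrib]
  simpa only [summand_wz] using telescope

/-- For every natural number `n`,
`∑_{r=0}^{n} ((-1)^r / (1-2r)) binom(2r,r) binom(n+r,2r+1) = n²`. -/
theorem stmt5 (n : ℕ) :
    ∑ r ∈ Finset.range (n + 1),
        ((-1 : ℚ) ^ r / (1 - 2 * (r : ℚ))) * (Nat.choose (2 * r) r : ℚ)
          * (Nat.choose (n + r) (2 * r + 1) : ℚ)
      = (n : ℚ) ^ 2 := by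
  change ∑ r ∈ range (n + 1), summand n r = n ^ 2
  induction n with
  | zero => simp [summand]
  | succ k ih =>
    rcases k.eq_zero_or_pos with rfl | hk
    · simp [summand, sum_range_succ]
    · have hk' : (k : ℚ) ^ 2 ≠ 0 := by positivity
      apply mul_left_cancel₀ hk'
      rw [sum_summand_recurrence, ih]
      push_cast
      ring

end PaperStmt
end

section
/- For all nonnegative integers ℓ and n, ∑_{r=ℓ}^{n} (−1)^{ℓ+r} · (2 − δ_{0,n}) / ((r+ℓ)! (r−ℓ)!) · q(n, r) = δ_{ℓ,n}, where δ denotes the Kronecker delta. (The sum may be taken over all r ≥ ℓ since q(n,r) = 0 for r > n.) -/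
/-!
For `ℓ < n` the sum is Gosper-summable: the summand `t r` has the hypergeometric antidifference
`G r = -2 (-1)^(ℓ+r) (r² - ℓ²)/(n² - ℓ²) · q(n, r) / ((r+ℓ)! (r-ℓ)!)`,
so the sum telescopes to `G (n+1) - G ℓ`, and both vanish: `G ℓ` through the factor `r² - ℓ²`,
`G (n+1)` through the factor `n² - n²` of `q(n, n+1)`. For `ℓ = n ≥ 1` only `r = n` remains,
and `q(n, n) = (2n)!/2`.
-/

open scoped BigOperators

namespace PaperStmt

/-- `q(x, r) := ∏_{i=0}^{r-1} (x² - i²)`, with `q(x, 0) = 1`. -/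
def q (x : ℚ) (r : ℕ) : ℚ := ∏ i ∈ Finset.range r, (x ^ 2 - (i : ℚ) ^ 2)

open Finset

lemma q_succ (x : ℚ) (r : ℕ) : q x (r + 1) = q x r * (x ^ 2 - (r : ℚ) ^ 2) := by
  simp [q, prod_range_succ]

lemma q_natCast_eq_zero {n r : ℕ} (h : n < r) : q n r = 0 :=
  prod_eq_zero (mem_range.2 h) (sub_self _)

-- `q(n, r) = n!/(n-r)! · (n+r-1)!/(n-1)!`, cleared of denominators so that `n = 0` is allowed.
lemma q_natCast_mul_factorial {n r : ℕ} (hr : r ≤ n) :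
    q n r * (n - r).factorial * (n + r) = (n + r).factorial * n := by
  induction r with
  | zero => simp [q]
  | succ r ih =>
    have hrn : r ≤ n := by omega
    have IH := ih hrn
    rw [show n - r = (n - (r + 1)) + 1 by omega, Nat.factorial_succ] at IH
    rw [q_succ, ← add_assoc, Nat.factorial_succ]
    push_cast [Nat.cast_sub hr, Nat.cast_sub hrn] at IH ⊢
    linear_combination ((n : ℚ) + r + 1) * IH

lemma two_mul_q_natCast_self {n : ℕ} (hn : 0 < n) : 2 * q n n = (n + n).factorial := by
  have h := q_natCast_mul_factorial (le_refl n)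
  have hn0 : (n : ℚ) ≠ 0 := Nat.cast_ne_zero.2 hn.ne'
  simp only [Nat.sub_self, Nat.factorial_zero, Nat.cast_one, mul_one] at h
  apply mul_right_cancel₀ hn0
  linear_combination h

def term (ℓ : ℕ) (x : ℚ) (r : ℕ) : ℚ :=
  (-1) ^ (ℓ + r) * 2 / ((r + ℓ).factorial * (r - ℓ).factorial) * q x r

def antidiff (ℓ : ℕ) (x : ℚ) (r : ℕ) : ℚ :=
  -2 * (-1) ^ (ℓ + r) * ((r ^ 2 - ℓ ^ 2) / (x ^ 2 - ℓ ^ 2)) * q x r /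
    ((r + ℓ).factorial * (r - ℓ).factorial)

lemma antidiff_self (ℓ : ℕ) (x : ℚ) : antidiff ℓ x ℓ = 0 := by
  simp [antidiff]

lemma antidiff_succ_sub {ℓ r : ℕ} {x : ℚ} (hr : ℓ ≤ r) (hx : x ^ 2 ≠ ℓ ^ 2) :
    antidiff ℓ x (r + 1) - antidiff ℓ x r = term ℓ x r := by
  unfold antidiff term
  rw [show r + 1 + ℓ = r + ℓ + 1 by omega, show r + 1 - ℓ = r - ℓ + 1 by omega,
    Nat.factorial_succ, Nat.factorial_succ, q_succ, ← add_assoc, pow_succ]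
  have hx' : x ^ 2 - ℓ ^ 2 ≠ 0 := sub_ne_zero.2 hx
  have hrℓ : (ℓ : ℚ) ≤ r := by exact_mod_cast hr
  have hd : (r : ℚ) - ℓ + 1 ≠ 0 := by linarith
  push_cast [Nat.cast_sub hr]
  field_simp
  ring

lemma sum_Icc_term {ℓ m : ℕ} {x : ℚ} (hm : ℓ ≤ m) (hx : x ^ 2 ≠ ℓ ^ 2) :
    ∑ r ∈ Icc ℓ m, term ℓ x r = antidiff ℓ x (m + 1) := by
  induction m, hm using Nat.le_induction with
  | base => rw [Icc_self, sum_singleton, ← antidiff_succ_sub le_rfl hx, antidiff_self, sub_zero]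
  | succ m _ ih =>
    rw [sum_Icc_succ_top (by omega), ih, ← antidiff_succ_sub (by omega) hx]
    ring

lemma sum_Icc_term_natCast {ℓ n : ℕ} (h : ℓ < n) : ∑ r ∈ Icc ℓ n, term ℓ n r = 0 := by
  have hx : (n : ℚ) ^ 2 ≠ ℓ ^ 2 := by
    exact_mod_cast (Nat.pow_lt_pow_left h two_ne_zero).ne'
  rw [sum_Icc_term h.le hx, antidiff, q_natCast_eq_zero n.lt_succ_self]
  simp

/-- Representation of the Kronecker delta:
`δ_{ℓ,n} = ∑_{r=ℓ}^{n} (-1)^{ℓ+r} (2 - δ_{0,n}) / ((r+ℓ)! (r-ℓ)!) q(n, r)`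
for nonnegative integers `ℓ, n`. -/
theorem stmt7 (ℓ n : ℕ) :
    ∑ r ∈ Finset.Icc ℓ n,
        (-1 : ℚ) ^ (ℓ + r) * ((2 : ℚ) - if (0 : ℕ) = n then 1 else 0)
            / ((Nat.factorial (r + ℓ) : ℚ) * (Nat.factorial (r - ℓ) : ℚ)) * q n r
      = if ℓ = n then 1 else 0 := by
  rcases lt_trichotomy ℓ n with h | rfl | h
  · rw [if_neg (by omega), if_neg h.ne, sub_zero]
    exact sum_Icc_term_natCast h
  · rw [Icc_self, sum_singleton, if_pos rfl, Nat.sub_self, Nat.factorial_zero,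
      Even.neg_one_pow ⟨ℓ, rfl⟩]
    rcases Nat.eq_zero_or_pos ℓ with rfl | hℓ
    · norm_num [q]
    · rw [if_neg hℓ.ne, sub_zero, Nat.cast_one, one_mul, mul_one, div_mul_eq_mul_div,
        two_mul_q_natCast_self hℓ, div_self (by positivity)]
  · rw [Icc_eq_empty (by omega), sum_empty, if_neg h.ne']

end PaperStmt
end

section
/- For every integer r ≥ 2, ∑_{ℓ=2}^{r} (−1)^ℓ ℓ / ((r+ℓ)! (r−ℓ)!) = 3(r−1) / (2(2r−1) (r−1)! (r+1)!). -/
/- The summand has a hypergeometric antidifference (Gosper): the alternating tail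
`∑_{ℓ=a}^{r} (-1)^ℓ ℓ / ((r+ℓ)! (r-ℓ)!)` equals `(-1)^a (2a-1) / (2 (2r-1) (r+a-1)! (r-a)!)`
for `1 ≤ a ≤ r`. This is a one-step rational identity plus downward induction on `a`;
the theorem is the case `a = 2`. -/

open scoped BigOperators

namespace PaperStmt

open Finset Nat

def alternatingTail (r a : ℕ) : ℚ :=
  (-1) ^ a * (2 * a - 1) / (2 * (2 * r - 1) * ((r + a - 1)! : ℚ) * ((r - a)! : ℚ))

lemma neg_one_pow_mul_div_factorial_add_alternatingTail {r a : ℕ} (ha : 1 ≤ a) (har : a < r) :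
    (-1 : ℚ) ^ a * a / (((r + a)! : ℚ) * ((r - a)! : ℚ)) + alternatingTail r (a + 1) =
      alternatingTail r a := by
  obtain ⟨b, rfl⟩ : ∃ b, a = b + 1 := ⟨a - 1, by omega⟩
  obtain ⟨k, rfl⟩ : ∃ k, r = b + 2 + k := ⟨r - (b + 2), by omega⟩
  unfold alternatingTail
  rw [show b + 2 + k + (b + 1 + 1) - 1 = (2 * b + k + 2) + 1 by omega,
    show b + 2 + k + (b + 1) - 1 = 2 * b + k + 2 by omega,
    show b + 2 + k + (b + 1) = (2 * b + k + 2) + 1 by omega,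
    show b + 2 + k - (b + 1) = k + 1 by omega, show b + 2 + k - (b + 1 + 1) = k by omega,
    factorial_succ (2 * b + k + 2), factorial_succ k]
  have : (2 * ((b + 2 + k : ℕ) : ℚ) - 1) = 2 * b + 2 * k + 3 := by push_cast; ring
  rw [this]
  push_cast
  field_simp
  ring

theorem sum_Icc_neg_one_pow_mul_div_factorial {r a : ℕ} (ha : 1 ≤ a) (har : a ≤ r) :
    ∑ ℓ ∈ Icc a r, (-1 : ℚ) ^ ℓ * ℓ / (((r + ℓ)! : ℚ) * ((r - ℓ)! : ℚ)) =
      alternatingTail r a := by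
  obtain ⟨k, rfl⟩ : ∃ k, r = a + k := ⟨r - a, by omega⟩
  induction k generalizing a with
  | zero =>
    obtain ⟨b, rfl⟩ : ∃ b, a = b + 1 := ⟨a - 1, by omega⟩
    unfold alternatingTail
    rw [add_zero, Icc_self, sum_singleton, Nat.sub_self, show b + 1 + (b + 1) - 1 = b + 1 + b by omega,
      show b + 1 + (b + 1) = (b + 1 + b) + 1 by omega, factorial_succ]
    have : (2 * ((b + 1 : ℕ) : ℚ) - 1) = 2 * b + 1 := by push_cast; ring
    rw [this]
    push_cast
    field_simp
    ring
  | succ k ih =>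
    rw [← add_sum_Ioc_eq_sum_Icc (by omega), ← Icc_add_one_left_eq_Ioc,
      show a + (k + 1) = a + 1 + k by omega, ih (by omega) (by omega)]
    exact neg_one_pow_mul_div_factorial_add_alternatingTail ha (by omega)

/-- For `r ≥ 2`, `∑_{ℓ=2}^{r} (-1)^ℓ ℓ / ((r+ℓ)!(r-ℓ)!) = 3(r-1)/(2(2r-1)(r-1)!(r+1)!)`. -/
theorem stmt9 (r : ℕ) (hr : 2 ≤ r) :
    ∑ ℓ ∈ Finset.Icc 2 r,
        (-1 : ℚ) ^ ℓ * (ℓ : ℚ) / ((Nat.factorial (r + ℓ) : ℚ) * (Nat.factorial (r - ℓ) : ℚ))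
      = 3 * ((r : ℚ) - 1)
          / (2 * (2 * (r : ℚ) - 1) * (Nat.factorial (r - 1) : ℚ) * (Nat.factorial (r + 1) : ℚ)) := by
  rw [sum_Icc_neg_one_pow_mul_div_factorial le_add_self hr, alternatingTail]
  obtain ⟨s, rfl⟩ : ∃ s, r = s + 2 := ⟨r - 2, by omega⟩
  rw [show s + 2 + 2 - 1 = s + 2 + 1 by omega, show s + 2 - 2 = s by omega,
    show s + 2 - 1 = s + 1 by omega, factorial_succ s]
  have : (2 * ((s + 2 : ℕ) : ℚ) - 1) = 2 * s + 3 := by push_cast; ring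
  rw [this]
  push_cast
  field_simp
  ring

end PaperStmt
end
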